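/- arXiv:2401.03170 — 3 statements merged into one kernel-verified Lean document; each statement's English description precedes it below -/
import Mathlib

section
/- In the Gaussian feature model with labels y ∈ {1,-1} uniformly distributed (η = 1/2), common variance σ² for both feature blocks, and test-domain features z_d ~ N(y·w_d·μ_d, σ²I), z_s ~ N(y·w_s·γ·μ_s, σ²I), the expected test-domain 0-1 risk of the training-domain Bayes classifier composed with featurizer Φ_{(w_d,w_s)} equals F(-(1/σ)·(w_d²‖μ_d‖₂² + γ·w_s²‖μ_s‖₂²)/√(w_d²‖μ_d‖₂² + w_s²‖μ_s‖₂²)), where F is the standard normal CDF. -/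
open MeasureTheory ProbabilityTheory

/-- The CDF of the standard normal distribution `N(0,1)`. -/
noncomputable def stdNormalCDF (t : ℝ) : ℝ :=
  ((gaussianReal 0 1) (Set.Iic t)).toReal

/-- Test-domain feature distribution given label `y`: `z_d ~ N(y·w_d·μ_d, σ²I)` and
`z_s ~ N(y·w_s·γ·μ_s, σ²I)` independent. -/
noncomputable def testMeasure (pd ps : ℕ) (μd : EuclideanSpace ℝ (Fin pd))
    (μs : EuclideanSpace ℝ (Fin ps)) (wd ws σ γ : ℝ) (y : ℝ) :
    Measure ((Fin pd → ℝ) × (Fin ps → ℝ)) :=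
  (Measure.pi fun i => gaussianReal (y * wd * μd i) ⟨σ ^ 2, sq_nonneg σ⟩).prod
    (Measure.pi fun i => gaussianReal (y * ws * γ * μs i) ⟨σ ^ 2, sq_nonneg σ⟩)

/-!
Under either label the Bayes score is a linear functional of independent Gaussian coordinates,
hence Gaussian: with `A = w_d²‖μ_d‖²` and `B = w_s²‖μ_s‖²` its law is
`N(±(2/σ²)(A + γB), (4/σ²)(A + B))`. Reflecting `x ↦ -x`, both error terms become the probability
that `N(m, v)` is nonpositive, which is `F(-m/√v)`. If the variance vanishes then so does the
mean, the score is identically `0`, and both sides equal `1/2`.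
-/

open scoped NNReal

lemma pi_gaussianReal_map_sum {ι : Type*} [Fintype ι] (m : ι → ℝ) (v : ι → ℝ≥0) :
    (Measure.pi fun i => gaussianReal (m i) (v i)).map (fun z => ∑ i, z i)
      = gaussianReal (∑ i, m i) (∑ i, v i) := by
  refine Measure.ext_of_charFun (funext fun t => ?_)
  rw [charFun_map_sum_pi_eq_prod, Finset.prod_apply]
  simp_rw [charFun_gaussianReal, ← Complex.exp_sum]
  push_cast
  congr 1
  simp only [Finset.sum_sub_distrib, Finset.mul_sum, Finset.sum_mul, Finset.sum_div]

lemma pi_gaussianReal_map_weightedSum {ι : Type*} [Fintype ι] (a m : ι → ℝ) (v : ι → ℝ≥0) :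
    (Measure.pi fun i => gaussianReal (m i) (v i)).map (fun z => ∑ i, a i * z i)
      = gaussianReal (∑ i, a i * m i) (∑ i, ⟨a i ^ 2, sq_nonneg _⟩ * v i) := by
  have hscale : (Measure.pi fun i => gaussianReal (m i) (v i)).map (fun z i => a i * z i)
      = Measure.pi fun i => gaussianReal (a i * m i) (⟨a i ^ 2, sq_nonneg _⟩ * v i) := by
    rw [Measure.pi_map_pi fun i => (measurable_const_mul (a i)).aemeasurable]
    simp_rw [gaussianReal_map_const_mul]
    rfl
  rw [← pi_gaussianReal_map_sum, ← hscale, Measure.map_map (by fun_prop) (by fun_prop)]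
  rfl

lemma prod_map_add_eq_conv {α β G : Type*} [MeasurableSpace α] [MeasurableSpace β]
    [AddMonoid G] [MeasurableSpace G] [MeasurableAdd₂ G] {μ : Measure α} {ν : Measure β}
    [SFinite μ] [SFinite ν] {f : α → G} {g : β → G} (hf : Measurable f) (hg : Measurable g) :
    (μ.prod ν).map (fun z => f z.1 + g z.2) = μ.map f ∗ ν.map g := by
  rw [Measure.conv, Measure.map_prod_map _ _ hf hg, Measure.map_map (by fun_prop) (hf.prodMap hg)]
  rfl

lemma gaussianReal_eq_map_stdGaussian (m : ℝ) (v : ℝ≥0) :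
    gaussianReal m v = (gaussianReal 0 1).map (fun x => √(v : ℝ) * x + m) := by
  rw [show (fun x => √(v : ℝ) * x + m) = (· + m) ∘ (√(v : ℝ) * ·) from rfl,
    ← Measure.map_map (by fun_prop) (by fun_prop), gaussianReal_map_const_mul,
    gaussianReal_map_add_const, mul_zero, zero_add]
  exact congrArg _ (NNReal.eq (by simp [Real.sq_sqrt v.coe_nonneg]))

lemma gaussianReal_Iic_toReal {v : ℝ≥0} (hv : v ≠ 0) (m t : ℝ) :
    (gaussianReal m v (Set.Iic t)).toReal = stdNormalCDF ((t - m) / √(v : ℝ)) := by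
  have hsqrt : 0 < √(v : ℝ) := Real.sqrt_pos.mpr (by positivity)
  rw [gaussianReal_eq_map_stdGaussian, Measure.map_apply (by fun_prop) measurableSet_Iic,
    stdNormalCDF]
  congr 3
  ext x
  simp only [Set.mem_preimage, Set.mem_Iic, le_div_iff₀ hsqrt]
  constructor <;> intro h <;> linarith

lemma gaussianReal_Iio {v : ℝ≥0} (hv : v ≠ 0) (m t : ℝ) :
    gaussianReal m v (Set.Iio t) = gaussianReal m v (Set.Iic t) :=
  have := nullSingletonClass_gaussianReal (μ := m) hv
  measure_congr Iio_ae_eq_Iic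

lemma gaussianReal_neg_Ici (m : ℝ) (v : ℝ≥0) (t : ℝ) :
    gaussianReal (-m) v (Set.Ici t) = gaussianReal m v (Set.Iic (-t)) := by
  rw [← gaussianReal_map_neg, Measure.map_apply measurable_neg measurableSet_Ici]
  congr 1
  ext x
  simp

lemma stdNormalCDF_zero : stdNormalCDF 0 = 1 / 2 := by
  have hsymm : gaussianReal 0 1 (Set.Ioi 0) = gaussianReal 0 1 (Set.Iic 0) := by
    have := nullSingletonClass_gaussianReal (μ := 0) one_ne_zero
    rw [measure_congr Ioi_ae_eq_Ici, ← neg_zero, gaussianReal_neg_Ici, neg_zero, neg_zero]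
  have htotal : gaussianReal 0 1 (Set.Iic 0) + gaussianReal 0 1 (Set.Ioi 0) = 1 := by
    rw [← Set.compl_Iic, measure_add_measure_compl measurableSet_Iic, measure_univ]
  rw [hsymm] at htotal
  have := congrArg ENNReal.toReal htotal
  rw [ENNReal.toReal_add (measure_ne_top _ _) (measure_ne_top _ _), ENNReal.toReal_one] at this
  rw [stdNormalCDF]
  linarith

/-- The 0-1 risk, with equal priors, of predicting `1` iff the score is nonnegative, when the
score is `N(m, v)` under label `1` and `N(-m, v)` under label `-1`. -/
lemma gaussianReal_sign_risk (m : ℝ) (v : ℝ≥0) (hmv : v = 0 → m = 0) :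
    (1 / 2) * (gaussianReal m v (Set.Iio 0)).toReal
      + (1 / 2) * (gaussianReal (-m) v (Set.Ici 0)).toReal = stdNormalCDF (-m / √(v : ℝ)) := by
  rcases eq_or_ne v 0 with rfl | hv
  · simp [hmv rfl, stdNormalCDF_zero]
  · rw [gaussianReal_neg_Ici, gaussianReal_Iio hv, neg_zero, gaussianReal_Iic_toReal hv, zero_sub]
    ring

/-- The score of the training-domain Bayes classifier, with weights
`(2 w_d μ_d / σ², 2 w_s μ_s / σ², 0)`; the classifier predicts `1` iff the score is nonnegative. -/
noncomputable def bayesScore (pd ps : ℕ) (μd : EuclideanSpace ℝ (Fin pd))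
    (μs : EuclideanSpace ℝ (Fin ps)) (wd ws σ : ℝ) (z : (Fin pd → ℝ) × (Fin ps → ℝ)) : ℝ :=
  (2 * wd / σ ^ 2) * (∑ i, μd i * z.1 i) + (2 * ws / σ ^ 2) * (∑ i, μs i * z.2 i)

lemma testMeasure_map_bayesScore {pd ps : ℕ} {μd : EuclideanSpace ℝ (Fin pd)}
    {μs : EuclideanSpace ℝ (Fin ps)} {wd ws σ γ : ℝ} (y : ℝ) (hσ : σ ≠ 0) :
    (testMeasure pd ps μd μs wd ws σ γ y).map (bayesScore pd ps μd μs wd ws σ)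
      = gaussianReal (y * (2 / σ ^ 2 * (wd ^ 2 * ‖μd‖ ^ 2 + γ * ws ^ 2 * ‖μs‖ ^ 2)))
          (4 / σ ^ 2 * (wd ^ 2 * ‖μd‖ ^ 2 + ws ^ 2 * ‖μs‖ ^ 2)).toNNReal := by
  have hscore : bayesScore pd ps μd μs wd ws σ = fun z =>
      (∑ i, (2 * wd / σ ^ 2 * μd i) * z.1 i) + ∑ i, (2 * ws / σ ^ 2 * μs i) * z.2 i := by
    funext z
    simp only [bayesScore, Finset.mul_sum, mul_assoc]
  -- `testMeasure` elaborates the variance `⟨σ ^ 2, _⟩` in `{r // 0 ≤ r}` rather than `ℝ≥0`, which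
  -- blocks both the `SFinite` instances and the rewrites below.
  let v : ℝ≥0 := ⟨σ ^ 2, sq_nonneg σ⟩
  change Measure.map _ ((Measure.pi fun i => gaussianReal (y * wd * μd i) v).prod
    (Measure.pi fun i => gaussianReal (y * ws * γ * μs i) v)) = _
  rw [hscore, prod_map_add_eq_conv (f := fun x : Fin pd → ℝ => ∑ i, (2 * wd / σ ^ 2 * μd i) * x i)
      (g := fun x : Fin ps → ℝ => ∑ i, (2 * ws / σ ^ 2 * μs i) * x i) (by fun_prop) (by fun_prop),
    pi_gaussianReal_map_weightedSum, pi_gaussianReal_map_weightedSum,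
    gaussianReal_conv_gaussianReal]
  simp only [EuclideanSpace.real_norm_sq_eq]
  congr 1
  · simp only [Finset.mul_sum, mul_add]
    congr 1 <;> exact Finset.sum_congr rfl fun i _ => by ring
  · refine NNReal.eq ?_
    rw [Real.coe_toNNReal _ (by positivity)]
    simp only [NNReal.coe_add, NNReal.coe_sum, Finset.mul_sum, mul_add]
    congr 1 <;> refine Finset.sum_congr rfl fun i _ => ?_
    · show (2 * wd / σ ^ 2 * μd i) ^ 2 * σ ^ 2 = _
      field_simp
      ring
    · show (2 * ws / σ ^ 2 * μs i) ^ 2 * σ ^ 2 = _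
      field_simp
      ring

theorem expected_test_domain_risk_general
    (pd ps : ℕ) (μd : EuclideanSpace ℝ (Fin pd)) (μs : EuclideanSpace ℝ (Fin ps))
    (wd ws σ γ : ℝ) (hσ : 0 < σ) :
    (1 / 2) * ((testMeasure pd ps μd μs wd ws σ γ 1)
        {z | (2 * wd / σ ^ 2) * (∑ i, μd i * z.1 i)
            + (2 * ws / σ ^ 2) * (∑ i, μs i * z.2 i) < 0}).toReal
      + (1 / 2) * ((testMeasure pd ps μd μs wd ws σ γ (-1))
        {z | 0 ≤ (2 * wd / σ ^ 2) * (∑ i, μd i * z.1 i)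
            + (2 * ws / σ ^ 2) * (∑ i, μs i * z.2 i)}).toReal
      = stdNormalCDF (-(1 / σ) * ((wd ^ 2 * ‖μd‖ ^ 2 + γ * ws ^ 2 * ‖μs‖ ^ 2)
          / Real.sqrt (wd ^ 2 * ‖μd‖ ^ 2 + ws ^ 2 * ‖μs‖ ^ 2))) := by
  have hscore : Measurable (bayesScore pd ps μd μs wd ws σ) := by
    unfold bayesScore; fun_prop
  change (1 / 2) * ((testMeasure pd ps μd μs wd ws σ γ 1)
        (bayesScore pd ps μd μs wd ws σ ⁻¹' Set.Iio 0)).toReal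
      + (1 / 2) * ((testMeasure pd ps μd μs wd ws σ γ (-1))
        (bayesScore pd ps μd μs wd ws σ ⁻¹' Set.Ici 0)).toReal = _
  rw [← Measure.map_apply hscore measurableSet_Iio, ← Measure.map_apply hscore measurableSet_Ici,
    testMeasure_map_bayesScore 1 hσ.ne', testMeasure_map_bayesScore (-1) hσ.ne', one_mul, neg_one_mul, mul_assoc γ]
  have hA : 0 ≤ wd ^ 2 * ‖μd‖ ^ 2 := by positivity
  have hB : 0 ≤ ws ^ 2 * ‖μs‖ ^ 2 := by positivity
  generalize wd ^ 2 * ‖μd‖ ^ 2 = A at hA ⊢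
  generalize ws ^ 2 * ‖μs‖ ^ 2 = B at hB ⊢
  have hdegenerate : (4 / σ ^ 2 * (A + B)).toNNReal = 0 → 2 / σ ^ 2 * (A + γ * B) = 0 := by
    intro h
    have hAB : A + B ≤ 0 :=
      nonpos_of_mul_nonpos_right (Real.toNNReal_eq_zero.mp h) (by positivity)
    rw [show A = 0 by linarith, show B = 0 by linarith]
    ring
  have hsqrt : √((4 / σ ^ 2 * (A + B)).toNNReal : ℝ) = 2 / σ * √(A + B) := by
    rw [Real.coe_toNNReal _ (by positivity), Real.sqrt_mul (by positivity),
      show (4 : ℝ) / σ ^ 2 = (2 / σ) ^ 2 by ring, Real.sqrt_sq (by positivity)]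
  rw [gaussianReal_sign_risk _ _ hdegenerate, hsqrt, neg_div, mul_div_mul_comm]
  congr 2
  field_simp

/-- Expected test-domain 0-1 risk (with `η = 1/2` and common variance `σ²`) of the
training-domain Bayes classifier on top of the featurizer `Φ_{(w_d,w_s)}` equals
`F(-(1/σ)·(w_d²‖μ_d‖² + γ w_s²‖μ_s‖²)/√(w_d²‖μ_d‖² + w_s²‖μ_s‖²))`. -/
theorem expected_test_domain_risk
    (pd ps : ℕ) (μd : EuclideanSpace ℝ (Fin pd)) (μs : EuclideanSpace ℝ (Fin ps))
    (wd ws σ γ : ℝ) (hσ : 0 < σ)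
    (hwd : wd ∈ Set.Icc (0 : ℝ) 1) (hws : ws ∈ Set.Icc (0 : ℝ) 1)
    (hw : (wd, ws) ≠ (0, 0)) :
    (1 / 2) * ((testMeasure pd ps μd μs wd ws σ γ 1)
        {z | (2 * wd / σ ^ 2) * (∑ i, μd i * z.1 i)
            + (2 * ws / σ ^ 2) * (∑ i, μs i * z.2 i) < 0}).toReal
      + (1 / 2) * ((testMeasure pd ps μd μs wd ws σ γ (-1))
        {z | 0 ≤ (2 * wd / σ ^ 2) * (∑ i, μd i * z.1 i)
            + (2 * ws / σ ^ 2) * (∑ i, μs i * z.2 i)}).toReal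
      = stdNormalCDF (-(1 / σ) * ((wd ^ 2 * ‖μd‖ ^ 2 + γ * ws ^ 2 * ‖μs‖ ^ 2)
          / Real.sqrt (wd ^ 2 * ‖μd‖ ^ 2 + ws ^ 2 * ‖μs‖ ^ 2))) :=
  expected_test_domain_risk_general pd ps μd μs wd ws σ γ hσ
end

section
/- If γ < 0, then for all w_s ∈ (0,1], the test-domain risk R(1, w_s) := F(-(1/σ)·(‖μ_d‖₂² + γ·w_s²‖μ_s‖₂²)/√(‖μ_d‖₂² + w_s²‖μ_s‖₂²)) satisfies R(1, w_s) ≥ R(1, 0) = F(-‖μ_d‖₂/σ). That is, the invariant featurizer that completely suppresses the silent feature minimizes the test risk among featurizers of the form Φ_{(1, w_s)}. -/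
/-! Adding a silent feature with `γ ≤ 0` can only lower the numerator `‖μ_d‖² + γ b` and raise
the normalising denominator `√(‖μ_d‖² + b)`, so the margin never exceeds the invariant margin
`‖μ_d‖`; monotonicity of `F` turns this into the risk bound. -/

open MeasureTheory ProbabilityTheory

theorem stdNormalCDF_mono : Monotone stdNormalCDF := fun _ _ hst =>
  ENNReal.toReal_mono (measure_ne_top _ _) (measure_mono (Set.Iic_subset_Iic.mpr hst))

theorem div_sqrt_add_le_of_nonpos {a b γ : ℝ} (ha : 0 ≤ a) (hb : 0 ≤ b) (hγ : γ ≤ 0) :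
    (a ^ 2 + γ * b) / Real.sqrt (a ^ 2 + b) ≤ a := by
  refine div_le_of_le_mul₀ (Real.sqrt_nonneg _) ha ?_
  calc a ^ 2 + γ * b ≤ a ^ 2 := by nlinarith
    _ = a * Real.sqrt (a ^ 2) := by rw [Real.sqrt_sq ha, sq]
    _ ≤ a * Real.sqrt (a ^ 2 + b) := by gcongr; linarith

theorem invariant_optimal_of_gamma_neg_general
    (pd ps : ℕ) (μd : EuclideanSpace ℝ (Fin pd)) (μs : EuclideanSpace ℝ (Fin ps))
    (σ γ : ℝ) (hσ : 0 < σ) (hγ : γ < 0) :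
    ∀ ws ∈ Set.Ioc (0 : ℝ) 1,
      stdNormalCDF (-‖μd‖ / σ)
        ≤ stdNormalCDF (-(1 / σ) * ((‖μd‖ ^ 2 + γ * ws ^ 2 * ‖μs‖ ^ 2)
            / Real.sqrt (‖μd‖ ^ 2 + ws ^ 2 * ‖μs‖ ^ 2))) := by
  intro ws _
  have hmargin := div_sqrt_add_le_of_nonpos (norm_nonneg μd)
    (by positivity : 0 ≤ ws ^ 2 * ‖μs‖ ^ 2) hγ.le
  apply stdNormalCDF_mono
  rw [neg_div, neg_mul, neg_le_neg_iff, one_div_mul_eq_div, mul_assoc]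
  gcongr

/-- If `γ < 0`, then for all `w_s ∈ (0,1]`, the test-domain risk
`R(1, w_s) = F(-(1/σ)·(‖μ_d‖² + γ w_s²‖μ_s‖²)/√(‖μ_d‖² + w_s²‖μ_s‖²))` satisfies
`R(1, w_s) ≥ R(1, 0) = F(-‖μ_d‖/σ)`: the invariant featurizer is optimal. -/
theorem invariant_optimal_of_gamma_neg
    (pd ps : ℕ) (μd : EuclideanSpace ℝ (Fin pd)) (μs : EuclideanSpace ℝ (Fin ps))
    (σ γ : ℝ) (hσ : 0 < σ) (hμd : μd ≠ 0) (hγ : γ < 0) :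
    ∀ ws ∈ Set.Ioc (0 : ℝ) 1,
      stdNormalCDF (-‖μd‖ / σ)
        ≤ stdNormalCDF (-(1 / σ) * ((‖μd‖ ^ 2 + γ * ws ^ 2 * ‖μs‖ ^ 2)
            / Real.sqrt (‖μd‖ ^ 2 + ws ^ 2 * ‖μs‖ ^ 2))) :=
  invariant_optimal_of_gamma_neg_general pd ps μd μs σ γ hσ hγ
end

section
/- If γ > 1, then for all w_s ∈ (0,1], the test-domain risk satisfies R(1, w_s) := F(-(1/σ)·(‖μ_d‖₂² + γ·w_s²‖μ_s‖₂²)/√(‖μ_d‖₂² + w_s²‖μ_s‖₂²)) ≤ F(-‖μ_d‖₂/σ) = R(1, 0). That is, when the silent feature is more predictive at test time, preserving it yields test-domain risk no larger than the invariant featurizer, with strict inequality when μ_s ≠ 0. -/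
/-!
The margin `(‖μ_d‖² + γ a) / √(‖μ_d‖² + a)` with `a = w_s²‖μ_s‖²` is at least
`(‖μ_d‖² + a) / √(‖μ_d‖² + a) = √(‖μ_d‖² + a) ≥ ‖μ_d‖` since `γ ≥ 1`, and the last step is
strict once `a > 0`. The risk `F(-margin / σ)` is monotone decreasing in the margin because the
standard normal CDF `F` is strictly increasing: the Gaussian charges every nondegenerate interval.
-/

open MeasureTheory ProbabilityTheory

theorem gaussianReal_Ioc_ne_zero {a b : ℝ} (h : a < b) : gaussianReal 0 1 (Set.Ioc a b) ≠ 0 := by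
  intro h0
  have := gaussianReal_absolutelyContinuous' 0 one_ne_zero h0
  rw [Real.volume_Ioc, ENNReal.ofReal_eq_zero, sub_nonpos] at this
  exact this.not_gt h

theorem stdNormalCDF_strictMono : StrictMono stdNormalCDF := by
  intro a b hab
  have hsplit : gaussianReal 0 1 (Set.Iic b)
      = gaussianReal 0 1 (Set.Iic a) + gaussianReal 0 1 (Set.Ioc a b) := by
    rw [← measure_union (Set.Iic_disjoint_Ioc le_rfl) measurableSet_Ioc,
      Set.Iic_union_Ioc_eq_Iic hab.le]
  have hpos : 0 < (gaussianReal 0 1 (Set.Ioc a b)).toReal :=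
    ENNReal.toReal_pos (gaussianReal_Ioc_ne_zero hab) (measure_ne_top _ _)
  unfold stdNormalCDF
  rw [hsplit, ENNReal.toReal_add (measure_ne_top _ _) (measure_ne_top _ _)]
  linarith

theorem Real.sqrt_le_div_sqrt_of_le {x c : ℝ} (h : x ≤ c) : √x ≤ c / √x := by
  calc √x = x / √x := (Real.div_sqrt).symm
    _ ≤ c / √x := div_le_div_of_nonneg_right h (Real.sqrt_nonneg x)

theorem preserve_silent_beats_invariant_of_gamma_gt_one_general
    (pd ps : ℕ) (μd : EuclideanSpace ℝ (Fin pd)) (μs : EuclideanSpace ℝ (Fin ps))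
    (σ γ : ℝ) (hσ : 0 < σ) (hγ : 1 < γ) :
    ∀ ws ∈ Set.Ioc (0 : ℝ) 1,
      stdNormalCDF (-(1 / σ) * ((‖μd‖ ^ 2 + γ * ws ^ 2 * ‖μs‖ ^ 2)
            / Real.sqrt (‖μd‖ ^ 2 + ws ^ 2 * ‖μs‖ ^ 2)))
        ≤ stdNormalCDF (-‖μd‖ / σ)
      ∧ (μs ≠ 0 →
        stdNormalCDF (-(1 / σ) * ((‖μd‖ ^ 2 + γ * ws ^ 2 * ‖μs‖ ^ 2)
            / Real.sqrt (‖μd‖ ^ 2 + ws ^ 2 * ‖μs‖ ^ 2)))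
          < stdNormalCDF (-‖μd‖ / σ)) := by
  rintro ws ⟨hws, -⟩
  set margin := (‖μd‖ ^ 2 + γ * ws ^ 2 * ‖μs‖ ^ 2) / √(‖μd‖ ^ 2 + ws ^ 2 * ‖μs‖ ^ 2)
  have hsqrt_le_margin : √(‖μd‖ ^ 2 + ws ^ 2 * ‖μs‖ ^ 2) ≤ margin := by
    refine Real.sqrt_le_div_sqrt_of_le ?_
    have : 0 ≤ ws ^ 2 * ‖μs‖ ^ 2 := by positivity
    nlinarith
  rw [show -(1 / σ) * margin = -margin / σ by ring]
  constructor
  · have : ‖μd‖ ≤ margin :=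
      (Real.le_sqrt_of_sq_le (le_add_of_nonneg_right (by positivity))).trans hsqrt_le_margin
    exact stdNormalCDF_strictMono.monotone (by gcongr)
  · intro hμs
    have : ‖μd‖ < margin :=
      (Real.lt_sqrt_of_sq_lt (lt_add_of_pos_right _ (by
        have := norm_pos_iff.2 hμs; positivity))).trans_le hsqrt_le_margin
    exact stdNormalCDF_strictMono (by gcongr)

/-- If `γ > 1`, then for all `w_s ∈ (0,1]` the test-domain risk
`R(1, w_s) = F(-(1/σ)·(‖μ_d‖² + γ w_s²‖μ_s‖²)/√(‖μ_d‖² + w_s²‖μ_s‖²))` satisfies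
`R(1, w_s) ≤ F(-‖μ_d‖/σ) = R(1, 0)`, with strict inequality when `μ_s ≠ 0`. -/
theorem preserve_silent_beats_invariant_of_gamma_gt_one
    (pd ps : ℕ) (μd : EuclideanSpace ℝ (Fin pd)) (μs : EuclideanSpace ℝ (Fin ps))
    (σ γ : ℝ) (hσ : 0 < σ) (hμd : μd ≠ 0) (hγ : 1 < γ) :
    ∀ ws ∈ Set.Ioc (0 : ℝ) 1,
      stdNormalCDF (-(1 / σ) * ((‖μd‖ ^ 2 + γ * ws ^ 2 * ‖μs‖ ^ 2)
            / Real.sqrt (‖μd‖ ^ 2 + ws ^ 2 * ‖μs‖ ^ 2)))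
        ≤ stdNormalCDF (-‖μd‖ / σ)
      ∧ (μs ≠ 0 →
        stdNormalCDF (-(1 / σ) * ((‖μd‖ ^ 2 + γ * ws ^ 2 * ‖μs‖ ^ 2)
            / Real.sqrt (‖μd‖ ^ 2 + ws ^ 2 * ‖μs‖ ^ 2)))
          < stdNormalCDF (-‖μd‖ / σ)) :=
  preserve_silent_beats_invariant_of_gamma_gt_one_general pd ps μd μs σ γ hσ hγ
end
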